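/- arXiv:1507.01655 — 5 statements merged into one kernel-verified Lean document; each statement's English description precedes it below -/
import Mathlib

section
/- Let K be an abstract simplicial complex that is pure of dimension d, and suppose the intervals [G_F, F], one for each facet F, form a partition of K. Then for every k with 0 ≤ k ≤ d+1, the h-vector component satisfies h_k(K) = |{F : F is a facet of K and |G_F| = k}|. -/
/-!
Give a face with `i` vertices the weight `(-1)^(k-i) C(d+1-i, d+1-k)` when `i ≤ k` (and `0`
otherwise); then `h_k` is the total weight of all faces, and the partition splits it into the
total weights of the intervals `[G F, F]`. An interval with `|G F| = g` has weight
`∑_j C(d+1-g, j) (-1)^(k-g-j) C(d+1-g-j, d+1-k) = C(d+1-g, k-g) ∑_j (-1)^(k-g-j) C(k-g, j)`,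
which is `1` if `g = k` and `0` otherwise.
-/

/-- An abstract simplicial complex on a vertex type `V`: a finite collection of finite
subsets of `V` (the faces) containing the empty set and closed under taking subsets. -/
structure FinAbstractSimplicialComplex (V : Type*) [DecidableEq V] where
  faces : Finset (Finset V)
  empty_mem : ∅ ∈ faces
  down_closed : ∀ ⦃s t : Finset V⦄, s ∈ faces → t ⊆ s → t ∈ faces

open Finset

theorem sum_range_neg_one_pow_sub_mul_choose (r : ℕ) :
    ∑ j ∈ range (r + 1), (-1 : ℤ) ^ (r - j) * r.choose j = if r = 0 then 1 else 0 := by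
  rw [← Int.alternating_sum_range_choose, ← sum_range_reflect]
  refine sum_congr rfl fun j hj => ?_
  have hjr : j ≤ r := Nat.lt_succ_iff.mp (mem_range.mp hj)
  rw [add_tsub_cancel_right, Nat.sub_sub_self hjr, Nat.choose_symm hjr]

theorem sum_range_choose_mul_neg_one_pow_mul_choose {m r : ℕ} (hr : r ≤ m) :
    ∑ j ∈ range (r + 1), (m.choose j : ℤ) * ((-1) ^ (r - j) * (m - j).choose (m - r))
      = if r = 0 then 1 else 0 := by
  have hterm : ∀ j ∈ range (r + 1), (m.choose j : ℤ) * ((-1) ^ (r - j) * (m - j).choose (m - r))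
      = m.choose r * ((-1) ^ (r - j) * r.choose j) := by
    intro j hj
    have hjr : j ≤ r := Nat.lt_succ_iff.mp (mem_range.mp hj)
    have hmul : (m.choose r : ℤ) * r.choose j = m.choose j * (m - j).choose (m - r) := by
      rw [Nat.choose_symm_of_eq_add (by omega : m - j = (m - r) + (r - j))]
      exact_mod_cast Nat.choose_mul hjr
    linear_combination (-(-1 : ℤ) ^ (r - j)) * hmul
  rw [sum_congr rfl hterm, ← mul_sum, sum_range_neg_one_pow_sub_mul_choose]
  split_ifs with h <;> simp [h]

/-- The contribution of a face with `i` vertices to `h_k` of a complex of dimension `n - 1`. -/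
def hWeight (n k i : ℕ) : ℤ := if i ≤ k then (-1) ^ (k - i) * (n - i).choose (n - k) else 0

theorem sum_range_choose_smul_hWeight {n k g : ℕ} (hk : k ≤ n) :
    ∑ j ∈ range (n - g + 1), (n - g).choose j • hWeight n k (g + j)
      = if g = k then 1 else 0 := by
  by_cases hgk : g ≤ k
  · have hvanish : ∀ j ∈ range (n - g + 1), j ∉ range (k - g + 1) →
        (n - g).choose j • hWeight n k (g + j) = 0 := by
      intro j _ hj
      rw [mem_range] at hj
      rw [hWeight, if_neg (by omega), smul_zero]
    rw [← sum_subset (range_subset_range.mpr (by omega)) hvanish]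
    have hterm : ∀ j ∈ range (k - g + 1), (n - g).choose j • hWeight n k (g + j)
        = ((n - g).choose j : ℤ) * ((-1) ^ (k - g - j) * (n - g - j).choose (n - g - (k - g))) := by
      intro j hj
      rw [mem_range] at hj
      rw [hWeight, if_pos (by omega), nsmul_eq_mul, show k - g - j = k - (g + j) by omega,
        show n - g - j = n - (g + j) by omega, show n - g - (k - g) = n - k by omega]
    rw [sum_congr rfl hterm, sum_range_choose_mul_neg_one_pow_mul_choose (by omega)]
    simp only [show k - g = 0 ↔ g = k by omega]
  · rw [if_neg (by omega)]
    refine sum_eq_zero fun j _ => ?_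
    rw [hWeight, if_neg (by omega), smul_zero]

theorem sum_Icc_apply_card {α M : Type*} [DecidableEq α] [AddCommMonoid M] {A B : Finset α}
    (h : A ⊆ B) (f : ℕ → M) :
    ∑ s ∈ Icc A B, f #s = ∑ j ∈ range (#B - #A + 1), (#B - #A).choose j • f (#A + j) := by
  have hdisj : ∀ t ∈ (B \ A).powerset, Disjoint A t := fun t ht =>
    disjoint_sdiff.mono_right (mem_powerset.mp ht)
  rw [Icc_eq_image_powerset h, sum_image fun t ht u hu htu => by
      rw [← union_sdiff_cancel_left (hdisj t ht), htu, union_sdiff_cancel_left (hdisj u hu)],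
    sum_congr rfl fun t ht => by rw [card_union_of_disjoint (hdisj t ht)],
    sum_powerset_apply_card (fun j => f (#A + j)), card_sdiff_of_subset h]

theorem sum_Icc_hWeight {α : Type*} [DecidableEq α] {A B : Finset α} (h : A ⊆ B) {k : ℕ}
    (hk : k ≤ #B) : ∑ s ∈ Icc A B, hWeight #B k #s = if #A = k then 1 else 0 := by
  rw [sum_Icc_apply_card h, sum_range_choose_smul_hWeight hk]

theorem sum_eq_sum_sum_of_existsUnique {ι β M : Type*} [DecidableEq β] [AddCommMonoid M]
    {S : Finset β} {T : Finset ι} {I : ι → Finset β} (hI : ∀ i ∈ T, I i ⊆ S)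
    (hS : ∀ x ∈ S, ∃! i, i ∈ T ∧ x ∈ I i) (f : β → M) :
    ∑ x ∈ S, f x = ∑ i ∈ T, ∑ x ∈ I i, f x := by
  have hcover : S = T.biUnion I := by
    ext x
    simp only [mem_biUnion]
    exact ⟨fun hx => (hS x hx).exists, fun ⟨i, hi, hx⟩ => hI i hi hx⟩
  rw [hcover, sum_biUnion fun i hi j hj hij => disjoint_left.mpr fun x hxi hxj =>
    hij ((hS x (hI i hi hxi)).unique ⟨hi, hxi⟩ ⟨hj, hxj⟩)]

theorem sum_range_mul_card_filter_card_eq {α R : Type*} [CommSemiring R] (S : Finset (Finset α))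
    (k : ℕ) (f : ℕ → R) :
    ∑ i ∈ range (k + 1), f i * #(S.filter fun s => #s = i)
      = ∑ s ∈ S, if #s ≤ k then f #s else 0 := by
  simp_rw [natCast_card_filter, mul_sum, mul_boole]
  rw [sum_comm]
  refine sum_congr rfl fun s _ => ?_
  rw [sum_ite_eq (range (k + 1)) #s f]
  simp only [mem_range, Nat.lt_succ_iff]

theorem h_vector_eq_partition_count_general {V : Type*} [DecidableEq V]
    (K : FinAbstractSimplicialComplex V) (d : ℕ)
    (G : Finset V → Finset V)
    (hG : ∀ F ∈ K.faces, F.card = d + 1 → G F ⊆ F)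
    (hpart : ∀ s ∈ K.faces,
      ∃! F : Finset V, F ∈ K.faces ∧ F.card = d + 1 ∧ G F ⊆ s ∧ s ⊆ F) :
    ∀ k ≤ d + 1,
      (∑ i ∈ Finset.range (k + 1), (-1 : ℤ) ^ (k - i) * ((d + 1 - i).choose (d + 1 - k)) *
          ((K.faces.filter fun s => s.card = i).card : ℤ))
        = ((K.faces.filter fun F => F.card = d + 1 ∧ (G F).card = k).card : ℤ) := by
  intro k hk
  set facets := K.faces.filter fun F => F.card = d + 1
  have hinterval : ∀ F ∈ facets, Icc (G F) F ⊆ K.faces := fun F hF s hs =>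
    K.down_closed (mem_filter.mp hF).1 (mem_Icc.mp hs).2
  have hunique : ∀ s ∈ K.faces, ∃! F, F ∈ facets ∧ s ∈ Icc (G F) F := by
    simpa only [facets, mem_filter, mem_Icc, and_assoc] using hpart
  calc _ = ∑ s ∈ K.faces, hWeight (d + 1) k #s := sum_range_mul_card_filter_card_eq _ _ _
    _ = ∑ F ∈ facets, ∑ s ∈ Icc (G F) F, hWeight (d + 1) k #s :=
      sum_eq_sum_sum_of_existsUnique hinterval hunique _
    _ = ∑ F ∈ facets, if #(G F) = k then 1 else 0 := sum_congr rfl fun F hF => by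
      obtain ⟨hFK, hFcard⟩ := mem_filter.mp hF
      rw [← hFcard, sum_Icc_hWeight (hG F hFK hFcard) (hFcard ▸ hk)]
    _ = _ := by rw [sum_boole, filter_filter]

/-- Let `K` be an abstract simplicial complex, pure of dimension `d`, and
suppose the intervals `[G F, F]` (one for each facet `F`) form a partition of `K`. Then for
every `0 ≤ k ≤ d+1`, the `h`-vector component
`h_k(K) = ∑_{i=0}^{k} (-1)^{k-i} C(d+1-i, d+1-k) f_{i-1}(K)`
(where `f_{i-1}(K)` is the number of faces of cardinality `i`) equals the number of facets
`F` with `|G F| = k`. -/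
theorem h_vector_eq_partition_count {V : Type*} [DecidableEq V]
    (K : FinAbstractSimplicialComplex V) (d : ℕ)
    (hpure : ∀ s ∈ K.faces, ∃ F ∈ K.faces, s ⊆ F ∧ F.card = d + 1)
    (G : Finset V → Finset V)
    (hG : ∀ F ∈ K.faces, F.card = d + 1 → G F ⊆ F)
    (hpart : ∀ s ∈ K.faces,
      ∃! F : Finset V, F ∈ K.faces ∧ F.card = d + 1 ∧ G F ⊆ s ∧ s ⊆ F) :
    ∀ k ≤ d + 1,
      (∑ i ∈ Finset.range (k + 1), (-1 : ℤ) ^ (k - i) * ((d + 1 - i).choose (d + 1 - k)) *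
          ((K.faces.filter fun s => s.card = i).card : ℤ))
        = ((K.faces.filter fun F => F.card = d + 1 ∧ (G F).card = k).card : ℤ) :=
  h_vector_eq_partition_count_general K d G hG hpart
end

section
/- Let K be an abstract simplicial complex that is pure of dimension d, and suppose the intervals [G_F, F], one for each facet F, form a partition of K. Then for every i with -1 ≤ i ≤ d, the number of faces of K of cardinality i+1 equals Σ_F C(d+1-|G_F|, i+1-|G_F|), the sum ranging over all facets F of K, where C(a,b) denotes the binomial coefficient (interpreted as 0 when b < 0 or b > a). -/
/-- An abstract simplicial complex on a vertex type `V`: a finite collection of finite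
subsets of `V` (the faces) containing the empty set and closed under taking subsets. -/
structure AbstractSimplicialComplex' (V : Type*) [DecidableEq V] where
  faces : Finset (Finset V)
  empty_mem : ∅ ∈ faces
  down_closed : ∀ ⦃s t : Finset V⦄, s ∈ faces → t ⊆ s → t ∈ faces

/-!
The intervals `[G F, F]` cut the `j`-element faces into the disjoint blocks
`{s ⊆ F | G F ⊆ s, #s = j}`, and such a block is in bijection, via `s ↦ s \ G F`, with the
`(j - #G F)`-element subsets of `F \ G F`.
-/

open Finset

theorem Finset.card_eq_sum_card_of_existsUnique_mem {ι α : Type*} [DecidableEq α]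
    {S : Finset α} {I : Finset ι} {T : ι → Finset α} (hT : ∀ i ∈ I, T i ⊆ S)
    (hS : ∀ x ∈ S, ∃! i, i ∈ I ∧ x ∈ T i) :
    #S = ∑ i ∈ I, #(T i) := by
  have hcover : I.biUnion T = S := by
    ext x
    rw [mem_biUnion]
    exact ⟨fun ⟨i, hi, hx⟩ => hT i hi hx, fun hx => (hS x hx).exists⟩
  have hdisj : (I : Set ι).PairwiseDisjoint T := fun i hi i' hi' hne =>
    disjoint_left.2 fun x hx hx' => hne <| (hS x (hT i hi hx)).unique ⟨hi, hx⟩ ⟨hi', hx'⟩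
  rw [← hcover, card_biUnion hdisj]

theorem Finset.card_filter_powersetCard_subset_eq_ite {α : Type*} [DecidableEq α]
    {s t : Finset α} (hst : s ⊆ t) (n : ℕ) :
    #{u ∈ t.powersetCard n | s ⊆ u} = if #s ≤ n then (#t - #s).choose (n - #s) else 0 := by
  split_ifs with hsn
  · exact card_filter_powersetCard_subset s t n hst hsn
  · refine card_eq_zero.2 <| filter_eq_empty_iff.2 fun u hu hsu => hsn ?_
    exact (mem_powersetCard.1 hu).2 ▸ card_le_card hsu

theorem AbstractSimplicialComplex'.card_faces_eq_sum_over_intervals {V : Type*} [DecidableEq V]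
    (K : AbstractSimplicialComplex' V) (d : ℕ) (G : Finset V → Finset V)
    (hpart : ∀ s ∈ K.faces,
      ∃! F : Finset V, F ∈ K.faces ∧ F.card = d + 1 ∧ G F ⊆ s ∧ s ⊆ F) (j : ℕ) :
    #{s ∈ K.faces | #s = j}
      = ∑ F ∈ K.faces with #F = d + 1, #{s ∈ F.powersetCard j | G F ⊆ s} := by
  refine card_eq_sum_card_of_existsUnique_mem ?_ fun s hs => ?_
  · intro F hF s hs
    simp only [mem_filter, mem_powersetCard] at hF hs ⊢
    exact ⟨K.down_closed hF.1 hs.1.1, hs.1.2⟩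
  · rw [mem_filter] at hs
    refine (existsUnique_congr fun F => ?_).1 (hpart s hs.1)
    simp only [mem_filter, mem_powersetCard, hs.2]
    tauto

theorem face_count_eq_sum_over_facets_general {V : Type*} [DecidableEq V]
    (K : AbstractSimplicialComplex' V) (d : ℕ)
    (G : Finset V → Finset V)
    (hG : ∀ F ∈ K.faces, F.card = d + 1 → G F ⊆ F)
    (hpart : ∀ s ∈ K.faces,
      ∃! F : Finset V, F ∈ K.faces ∧ F.card = d + 1 ∧ G F ⊆ s ∧ s ⊆ F) :
    ∀ j ≤ d + 1,
      (K.faces.filter fun s => s.card = j).card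
        = ∑ F ∈ K.faces.filter fun F => F.card = d + 1,
            if (G F).card ≤ j then (d + 1 - (G F).card).choose (j - (G F).card) else 0 := by
  intro j _
  rw [K.card_faces_eq_sum_over_intervals d G hpart j]
  refine sum_congr rfl fun F hF => ?_
  obtain ⟨hFK, hFcard⟩ := mem_filter.1 hF
  rw [card_filter_powersetCard_subset_eq_ite (hG F hFK hFcard), hFcard]

/-- Let `K` be an abstract simplicial complex, pure of dimension `d`, with a
partition given by the intervals `[G F, F]` over the facets `F`. Then for every `i` with
`-1 ≤ i ≤ d` (below `j = i + 1`, so `0 ≤ j ≤ d+1`), the number of faces of `K` of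
cardinality `i+1` equals `∑_F C(d+1-|G F|, i+1-|G F|)`, the sum ranging over the facets `F`,
where the binomial coefficient is interpreted as `0` when its lower index is negative or
exceeds the upper index. -/
theorem face_count_eq_sum_over_facets {V : Type*} [DecidableEq V]
    (K : AbstractSimplicialComplex' V) (d : ℕ)
    (hpure : ∀ s ∈ K.faces, ∃ F ∈ K.faces, s ⊆ F ∧ F.card = d + 1)
    (G : Finset V → Finset V)
    (hG : ∀ F ∈ K.faces, F.card = d + 1 → G F ⊆ F)
    (hpart : ∀ s ∈ K.faces,
      ∃! F : Finset V, F ∈ K.faces ∧ F.card = d + 1 ∧ G F ⊆ s ∧ s ⊆ F) :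
    ∀ j ≤ d + 1,
      (K.faces.filter fun s => s.card = j).card
        = ∑ F ∈ K.faces.filter fun F => F.card = d + 1,
            if (G F).card ≤ j then (d + 1 - (G F).card).choose (j - (G F).card) else 0 :=
  face_count_eq_sum_over_facets_general K d G hG hpart
end

section
/- Let K be an abstract simplicial complex that is pure of dimension d ≥ 1 and partitionable, let v be a vertex contained in every facet of K, and suppose the link of v in K, namely link(v,K) = {s : v ∉ s and s ∪ {v} ∈ K}, has Euler characteristic 1, i.e., Σ_{i≥0} (-1)^i · f_i(link(v,K)) = 1. Then h_d(K) = 0. -/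
/-- The link of a vertex `v` in `K`: the collection of faces `s` with `v ∉ s` and
`s ∪ {v} ∈ K` (such an `s` is automatically a face of `K`, by downward closure). -/
def link {V : Type*} [DecidableEq V] (K : AbstractSimplicialComplex' V) (v : V) :
    Finset (Finset V) :=
  K.faces.filter fun s => v ∉ s ∧ insert v s ∈ K.faces

/-! Since `v` lies in every facet, `K` is the cone with apex `v` over `link(v, K)`: its faces are
the faces `t` of the link and the faces `t ∪ {v}`. Writing `h_d(K)` as a sum over faces, the two
contributions of each `t` add up to `(-1)^(d + |t|)`, so
`h_d(K) = (-1)^d ∑_{t ∈ link} (-1)^|t| = (-1)^d (1 - χ(link)) = 0`. -/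

open Finset

theorem Finset.sum_mul_card_filter_eq_sum {β R : Type*} [NonAssocSemiring R]
    (S : Finset β) (g : β → ℕ) (f : ℕ → R) {n : ℕ} (hS : ∀ b ∈ S, g b < n) :
    ∑ i ∈ range n, f i * (#(S.filter fun b => g b = i) : R) = ∑ b ∈ S, f (g b) := by
  rw [← sum_fiberwise_of_maps_to (g := g) (t := range n) (fun b hb => mem_range.2 (hS b hb))]
  refine sum_congr rfl fun i _ => ?_
  rw [sum_congr rfl fun b hb => congrArg f (mem_filter.1 hb).2, sum_const, nsmul_eq_mul]
  exact (Nat.cast_comm _ _).symm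

theorem Finset.sum_neg_one_pow_card_eq_one_sub {V : Type*} (S : Finset (Finset V))
    (hS : ∅ ∈ S) {d : ℕ} (hcard : ∀ s ∈ S, s.card ≤ d) :
    ∑ s ∈ S, (-1 : ℤ) ^ s.card
      = 1 - ∑ i ∈ range d, (-1 : ℤ) ^ i * #(S.filter fun s => s.card = i + 1) := by
  have hempty : S.filter (fun s => s.card = 0) = {∅} := by
    ext s
    simp only [mem_filter, card_eq_zero, mem_singleton]
    exact ⟨And.right, fun h => ⟨h ▸ hS, h⟩⟩
  rw [← S.sum_mul_card_filter_eq_sum card (fun i => (-1 : ℤ) ^ i)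
    (fun s hs => Nat.lt_succ_of_le (hcard s hs)), sum_range_succ', hempty]
  simp only [pow_succ, mul_neg_one, neg_mul, sum_neg_distrib, card_singleton]
  ring

namespace AbstractSimplicialComplex'

variable {V : Type*} [DecidableEq V] (K : AbstractSimplicialComplex' V) {v : V}

theorem card_le_of_pure {d : ℕ} (hpure : ∀ s ∈ K.faces, ∃ F ∈ K.faces, s ⊆ F ∧ F.card = d + 1)
    {s : Finset V} (hs : s ∈ K.faces) : s.card ≤ d + 1 := by
  obtain ⟨F, -, hsF, hF⟩ := hpure s hs
  exact hF ▸ card_le_card hsF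

theorem insert_mem_faces_of_pure {d : ℕ}
    (hpure : ∀ s ∈ K.faces, ∃ F ∈ K.faces, s ⊆ F ∧ F.card = d + 1)
    (hv : ∀ F ∈ K.faces, F.card = d + 1 → v ∈ F) {s : Finset V} (hs : s ∈ K.faces) :
    insert v s ∈ K.faces := by
  obtain ⟨F, hF, hsF, hcard⟩ := hpure s hs
  exact K.down_closed hF (insert_subset (hv F hF hcard) hsF)

theorem mem_link {s : Finset V} : s ∈ link K v ↔ s ∈ K.faces ∧ v ∉ s ∧ insert v s ∈ K.faces :=
  mem_filter

theorem empty_mem_link (hv : {v} ∈ K.faces) : ∅ ∈ link K v :=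
  (K.mem_link).2 ⟨K.empty_mem, notMem_empty v, hv⟩

theorem card_le_of_mem_link {d : ℕ} (hcard : ∀ s ∈ K.faces, s.card ≤ d + 1) {t : Finset V}
    (ht : t ∈ link K v) : t.card ≤ d := by
  obtain ⟨-, hvt, hins⟩ := (K.mem_link).1 ht
  have := hcard _ hins
  rw [card_insert_of_notMem hvt] at this
  omega

theorem sum_faces_eq_sum_link_of_cone {M : Type*} [AddCommMonoid M]
    (hcone : ∀ s ∈ K.faces, insert v s ∈ K.faces) (φ : Finset V → M) :
    ∑ s ∈ K.faces, φ s = ∑ t ∈ link K v, (φ t + φ (insert v t)) := by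
  have hout : K.faces.filter (fun s => v ∉ s) = link K v := by
    ext s
    simp only [mem_filter, K.mem_link]
    exact ⟨fun h => ⟨h.1, h.2, hcone s h.1⟩, fun h => ⟨h.1, h.2.1⟩⟩
  have hin : ∑ s ∈ K.faces.filter (fun s => v ∈ s), φ s = ∑ t ∈ link K v, φ (insert v t) := by
    refine sum_nbij' (fun s => s.erase v) (insert v) (fun s hs => ?_) (fun t ht => ?_)
      (fun s hs => insert_erase (mem_filter.1 hs).2)
      (fun t ht => erase_insert ((K.mem_link).1 ht).2.1) (fun s hs => ?_)
    · obtain ⟨hs, hvs⟩ := mem_filter.1 hs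
      exact (K.mem_link).2 ⟨K.down_closed hs (erase_subset v s), notMem_erase v s,
        (insert_erase hvs).symm ▸ hs⟩
    · exact mem_filter.2 ⟨((K.mem_link).1 ht).2.2, mem_insert_self v t⟩
    · rw [insert_erase (mem_filter.1 hs).2]
  rw [← sum_filter_not_add_sum_filter K.faces (fun s => v ∈ s), hout, hin, sum_add_distrib]

end AbstractSimplicialComplex'

/-- The coefficient of `f_{j-1}` in `h_d` of a pure `d`-dimensional complex. -/
def hCoeff (d j : ℕ) : ℤ :=
  (-1) ^ (d - j) * ((d + 1 - j).choose 1 : ℕ)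

theorem hCoeff_succ_self (d : ℕ) : hCoeff d (d + 1) = 0 := by
  simp [hCoeff]

theorem hCoeff_add_hCoeff_succ {d j : ℕ} (hj : j ≤ d) :
    hCoeff d j + hCoeff d (j + 1) = (-1) ^ (d + j) := by
  obtain ⟨k, rfl⟩ := Nat.exists_eq_add_of_le hj
  rw [show j + k + j = k + 2 * j by omega, pow_add, pow_mul, neg_one_sq, one_pow, mul_one]
  rcases k with _ | k
  · simp [hCoeff]
  · simp only [hCoeff, Nat.choose_one_right, show j + (k + 1) - j = k + 1 by omega,
      show j + (k + 1) + 1 - j = k + 2 by omega, show j + (k + 1) - (j + 1) = k by omega,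
      show j + (k + 1) + 1 - (j + 1) = k + 1 by omega]
    push_cast
    ring

open AbstractSimplicialComplex' in
theorem h_d_eq_zero_of_link_euler_char_one_general {V : Type*} [DecidableEq V]
    (K : AbstractSimplicialComplex' V) (d : ℕ)
    (hpure : ∀ s ∈ K.faces, ∃ F ∈ K.faces, s ⊆ F ∧ F.card = d + 1)
    (v : V) (hv : ∀ F ∈ K.faces, F.card = d + 1 → v ∈ F)
    (heuler : (∑ i ∈ Finset.range d, (-1 : ℤ) ^ i *
        (((link K v).filter fun s => s.card = i + 1).card : ℤ)) = 1) :
    (∑ i ∈ Finset.range (d + 1), (-1 : ℤ) ^ (d - i) * ((d + 1 - i).choose (d + 1 - d)) *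
        ((K.faces.filter fun s => s.card = i).card : ℤ)) = 0 := by
  have hcone : ∀ s ∈ K.faces, insert v s ∈ K.faces := fun _ => K.insert_mem_faces_of_pure hpure hv
  have hcard : ∀ s ∈ K.faces, s.card ≤ d + 1 := fun _ => K.card_le_of_pure hpure
  have hlink : ∀ t ∈ link K v, t.card ≤ d := fun _ => K.card_le_of_mem_link hcard
  have heuler' : ∑ t ∈ link K v, (-1 : ℤ) ^ t.card = 0 := by
    rw [sum_neg_one_pow_card_eq_one_sub _ (K.empty_mem_link (hcone _ K.empty_mem)) hlink,
      heuler, sub_self]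
  calc _ = ∑ i ∈ range (d + 2), hCoeff d i * #(K.faces.filter fun s => s.card = i) := by
        rw [add_tsub_cancel_left, sum_range_succ _ (d + 1), hCoeff_succ_self, zero_mul, add_zero]
        rfl
    _ = ∑ t ∈ link K v, (hCoeff d t.card + hCoeff d (insert v t).card) := by
        rw [sum_mul_card_filter_eq_sum _ _ _ fun s hs => Nat.lt_succ_of_le (hcard s hs),
          K.sum_faces_eq_sum_link_of_cone hcone fun s => hCoeff d s.card]
    _ = ∑ t ∈ link K v, (-1 : ℤ) ^ (d + t.card) := by
        refine sum_congr rfl fun t ht => ?_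
        rw [card_insert_of_notMem ((K.mem_link).1 ht).2.1]
        exact hCoeff_add_hCoeff_succ (hlink t ht)
    _ = 0 := by simp only [pow_add, ← mul_sum, heuler', mul_zero]

/-- Let `K` be an abstract simplicial complex, pure of dimension `d ≥ 1`
and partitionable, let `v` be a vertex contained in every facet of `K`, and suppose the link
of `v` in `K` has Euler characteristic `1`, i.e. `∑_{i ≥ 0} (-1)^i f_i(link v K) = 1` (every
face of the link has cardinality at most `d`, so the sum over `0 ≤ i < d` captures all of
its nonempty faces). Then `h_d(K) = 0`, where
`h_k(K) = ∑_{i=0}^{k} (-1)^{k-i} C(d+1-i, d+1-k) f_{i-1}(K)` with `f_{i-1}` the number of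
faces of cardinality `i`. -/
theorem h_d_eq_zero_of_link_euler_char_one {V : Type*} [DecidableEq V]
    (K : AbstractSimplicialComplex' V) (d : ℕ) (hd : 1 ≤ d)
    (hpure : ∀ s ∈ K.faces, ∃ F ∈ K.faces, s ⊆ F ∧ F.card = d + 1)
    (hpartable : ∃ G : Finset V → Finset V,
      (∀ F ∈ K.faces, F.card = d + 1 → G F ⊆ F) ∧
      ∀ s ∈ K.faces,
        ∃! F : Finset V, F ∈ K.faces ∧ F.card = d + 1 ∧ G F ⊆ s ∧ s ⊆ F)
    (v : V) (hv : ∀ F ∈ K.faces, F.card = d + 1 → v ∈ F)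
    (heuler : (∑ i ∈ Finset.range d, (-1 : ℤ) ^ i *
        (((link K v).filter fun s => s.card = i + 1).card : ℤ)) = 1) :
    (∑ i ∈ Finset.range (d + 1), (-1 : ℤ) ^ (d - i) * ((d + 1 - i).choose (d + 1 - d)) *
        ((K.faces.filter fun s => s.card = i).card : ℤ)) = 0 :=
  h_d_eq_zero_of_link_euler_char_one_general K d hpure v hv heuler
end

section
/- Let K be a geometric simplicial complex in a finite-dimensional real vector space E with finitely many faces, pure of dimension d ≥ 1, whose underlying space |K| is convex. Suppose there is a point v that is a vertex of K contained in every facet of K, and which is an extreme point of |K|. Then h_d(K) = 0 and h_{d+1}(K) = 0. -/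
/-!
Since `v` lies in every facet, `K` is the cone with apex `v` over the family `L` of faces
avoiding `v`, so `f_i(K) = f_i(L) + f_{i-1}(L)`. Substituting this into the definition of the
`h`-vector, `h_{d+1}(K)` telescopes to `±f_d(L) = 0` and `h_d(K)` collapses to `±(1 - χ(L))`.

It remains to show `χ(L) = 1`. As `v` is an extreme point, a hyperplane `H` separates `v` from
all other vertices. Intersecting the cones `v * t`, `t ∈ L`, with `H` gives a family of convex
hulls with the same face poset as `L`, glued along faces, whose union `H ∩ |K|` is convex. The
Euler characteristic of any such family is `1`: by Möbius inversion over the face poset, its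
alternating face count is the value of the Euler valuation on the indicator of the union, a
polytope. The Euler valuation of polytopes is built by slicing along the coordinates and, on
the line, by counting right endpoints of intervals.
-/

/-- The components of the `f`-vector of a finite geometric simplicial complex, indexed so
that `fVec hfin i = f_{i-1}`, the number of faces with `i` elements; `fVec hfin 0 = 1`,
counting the empty face. -/
noncomputable def fVec {E : Type*} [AddCommGroup E] [Module ℝ E]
    (K : Geometry.SimplicialComplex ℝ E) (hfin : K.faces.Finite) (i : ℕ) : ℤ :=
  if i = 0 then 1 else ((hfin.toFinset.filter fun s => s.card = i).card : ℤ)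

/-- The `h`-vector components of a finite geometric simplicial complex, pure of dimension
`d`: `hVec hfin d k = ∑_{i=0}^{k} (-1)^{k-i} C(d+1-i, d+1-k) f_{i-1}`. -/
noncomputable def hVec {E : Type*} [AddCommGroup E] [Module ℝ E]
    (K : Geometry.SimplicialComplex ℝ E) (hfin : K.faces.Finite) (d k : ℕ) : ℤ :=
  ∑ i ∈ Finset.range (k + 1),
    (-1 : ℤ) ^ (k - i) * ((d + 1 - i).choose (d + 1 - k)) * fVec K hfin i

open Finset Topology

section EulerValuation

theorem eventually_mem_Icc_iff_mem_Ico (a b r : ℝ) :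
    ∀ᶠ t in 𝓝[>] r, (t ∈ Set.Icc a b ↔ r ∈ Set.Ico a b) := by
  rcases lt_or_ge r b with hrb | hbr
  · rcases le_or_gt a r with har | hra
    · filter_upwards [Ioo_mem_nhdsGT hrb] with t ht
      simp only [Set.mem_Icc, Set.mem_Ico, Set.mem_Ioo] at ht ⊢
      constructor <;> intro <;> constructor <;> linarith [ht.1, ht.2]
    · filter_upwards [nhdsWithin_le_nhds (Iio_mem_nhds hra)] with t ht
      simp only [Set.mem_Icc, Set.mem_Ico, Set.mem_Iio] at ht ⊢
      constructor <;> rintro ⟨h, -⟩ <;> linarith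
  · filter_upwards [self_mem_nhdsWithin] with t ht
    simp only [Set.mem_Icc, Set.mem_Ico, Set.mem_Ioi] at ht ⊢
    constructor <;> rintro ⟨-, h⟩ <;> linarith

variable {ι : Type*}

open scoped Classical in
theorem sum_eq_zero_of_forall_sum_mem_Icc_eq_zero (s : Finset ι) (a b : ι → ℝ)
    (hab : ∀ i ∈ s, a i ≤ b i) (c : ι → ℤ)
    (h : ∀ t, ∑ i ∈ s with t ∈ Set.Icc (a i) (b i), c i = 0) :
    ∑ i ∈ s, c i = 0 := by
  have right_end : ∀ r, ∑ i ∈ s with b i = r, c i = 0 := by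
    intro r
    -- just to the right of `r`, exactly the intervals ending at `r` stop containing the point
    obtain ⟨t, ht⟩ := ((Filter.eventually_all_finset s).2
      fun i _ => eventually_mem_Icc_iff_mem_Ico (a i) (b i) r).exists
    have hIco : ∑ i ∈ s with r ∈ Set.Ico (a i) (b i), c i = 0 := by
      rw [← h t]
      exact sum_congr (filter_congr fun i hi => (ht i hi).symm) fun _ _ => rfl
    suffices ∑ i ∈ s with b i = r, c i = ∑ i ∈ s with r ∈ Set.Icc (a i) (b i), c i -
        ∑ i ∈ s with r ∈ Set.Ico (a i) (b i), c i by rw [this, h r, hIco, sub_zero]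
    simp only [sum_filter, ← sum_sub_distrib]
    refine sum_congr rfl fun i hi => ?_
    have := hab i hi
    by_cases hb : b i = r <;> simp [hb, Set.mem_Icc, Set.mem_Ico] <;> grind
  rw [← sum_fiberwise_of_maps_to fun i hi => mem_image_of_mem b hi]
  exact sum_eq_zero fun r _ => right_end r

open scoped Classical in
theorem sum_nonempty_eq_zero_of_forall_sum_mem_eq_zero_real (s : Finset ι) (S : ι → Set ℝ)
    (hconv : ∀ i ∈ s, Convex ℝ (S i)) (hcpt : ∀ i ∈ s, IsCompact (S i)) (c : ι → ℤ)
    (h : ∀ t, ∑ i ∈ s with t ∈ S i, c i = 0) :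
    ∑ i ∈ s with (S i).Nonempty, c i = 0 := by
  have hIcc : ∀ i ∈ s, (S i).Nonempty → S i = Set.Icc (sInf (S i)) (sSup (S i)) :=
    fun i hi hne => eq_Icc_of_connected_compact ((hconv i hi).isConnected hne) (hcpt i hi)
  refine sum_eq_zero_of_forall_sum_mem_Icc_eq_zero _ (fun i => sInf (S i))
    (fun i => sSup (S i)) (fun i hi => ?_) c fun t => ?_
  · obtain ⟨hi, hne⟩ := mem_filter.1 hi
    exact csInf_le_csSup hne (hcpt i hi).bddBelow (hcpt i hi).bddAbove
  · rw [filter_filter, ← h t]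
    refine sum_congr (filter_congr fun i hi => ⟨fun ⟨hne, ht⟩ => ?_, fun ht => ?_⟩) fun _ _ => rfl
    · rwa [hIcc i hi hne]
    · exact ⟨⟨t, ht⟩, hIcc i hi ⟨t, ht⟩ ▸ ht⟩

open scoped Classical in
theorem sum_nonempty_eq_zero_of_forall_sum_mem_eq_zero {n : ℕ} (s : Finset ι)
    (A : ι → Set (Fin n → ℝ)) (hconv : ∀ i ∈ s, Convex ℝ (A i))
    (hcpt : ∀ i ∈ s, IsCompact (A i)) (c : ι → ℤ) (h : ∀ x, ∑ i ∈ s with x ∈ A i, c i = 0) :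
    ∑ i ∈ s with (A i).Nonempty, c i = 0 := by
  induction n with
  | zero =>
    rw [← h 0]
    refine sum_congr (filter_congr fun i _ => ?_) fun _ _ => rfl
    exact ⟨fun ⟨x, hx⟩ => Subsingleton.elim x 0 ▸ hx, fun h => ⟨0, h⟩⟩
  | succ n ih =>
    set slice : ℝ → ι → Set (Fin n → ℝ) := fun t i => Matrix.vecCons t ⁻¹' A i
    have slice_nonempty : ∀ t i, (slice t i).Nonempty ↔ t ∈ (fun x => x 0) '' A i := by
      refine fun t i => ⟨fun ⟨y, hy⟩ => ⟨_, hy, rfl⟩, ?_⟩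
      rintro ⟨x, hx, rfl⟩
      refine ⟨Matrix.vecTail x, ?_⟩
      change Matrix.vecCons (Matrix.vecHead x) (Matrix.vecTail x) ∈ A i
      rwa [Matrix.cons_head_tail]
    refine (sum_congr (filter_congr fun i _ => Set.image_nonempty.symm) fun _ _ => rfl).trans
      (sum_nonempty_eq_zero_of_forall_sum_mem_eq_zero_real s (fun i => (fun x => x 0) '' A i)
        (fun i hi => (hconv i hi).linear_image (LinearMap.proj 0))
        (fun i hi => (hcpt i hi).image (continuous_apply 0)) c fun t => ?_)
    refine (sum_congr (filter_congr fun i _ => (slice_nonempty t i).symm)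
      fun _ _ => rfl).trans (ih (slice t) (fun i hi => ?_) (fun i hi => ?_) fun y => h _)
    · intro y₁ hy₁ y₂ hy₂ a b ha hb hab
      convert (hconv i hi) hy₁ hy₂ ha hb hab using 1
      simp [slice, ← add_mul, hab]
    · exact ((hcpt i hi).image (f := Matrix.vecTail)
        (continuous_pi fun j => continuous_apply _)).of_isClosed_subset
        ((hcpt i hi).isClosed.preimage (continuous_const.matrixVecCons continuous_id))
        fun y hy => ⟨_, hy, Matrix.tail_cons t y⟩

open scoped Classical in
theorem sum_eq_one_of_forall_sum_mem_convexHull_eq_indicator {E : Type*} [AddCommGroup E]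
    [Module ℝ E] [FiniteDimensional ℝ E] (s : Finset ι) (P : ι → Finset E)
    (hP : ∀ i ∈ s, (P i).Nonempty) (Q : Finset E) (hQ : Q.Nonempty) (c : ι → ℤ)
    (h : ∀ x, ∑ i ∈ s with x ∈ convexHull ℝ (P i : Set E), c i =
      if x ∈ convexHull ℝ (Q : Set E) then 1 else 0) :
    ∑ i ∈ s, c i = 1 := by
  let e := (Module.finBasis ℝ E).equivFun
  have hmem : ∀ (T : Finset E) y,
      y ∈ e '' convexHull ℝ (T : Set E) ↔ e.symm y ∈ convexHull ℝ (T : Set E) :=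
    fun T y => by rw [e.image_eq_preimage_symm]; rfl
  have key := sum_nonempty_eq_zero_of_forall_sum_mem_eq_zero s.insertNone
    (fun o => e '' convexHull ℝ ((o.elim Q P : Finset E) : Set E))
    (fun o _ => (convex_convexHull ℝ _).linear_image e.toLinearMap)
    (fun o _ => by
      rw [show (e : E → _) = e.toLinearMap from rfl, LinearMap.image_convexHull]
      exact ((o.elim Q P).finite_toSet.image _).isCompact_convexHull ℝ)
    (fun o => o.elim (-1) c) fun y => by
      have := h (e.symm y)
      simp only [sum_filter, sum_insertNone, Option.elim, hmem] at this ⊢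
      rw [this]
      split_ifs <;> simp
  simp only [sum_filter, sum_insertNone, Option.elim, Set.image_nonempty,
    convexHull_nonempty_iff, coe_nonempty, hQ, if_true] at key
  rw [sum_congr rfl fun i hi => if_pos (hP i hi)] at key
  linarith

end EulerValuation

theorem Finset.sum_Icc_neg_one_pow_card {α : Type*} [DecidableEq α] (m t : Finset α) :
    ∑ s ∈ Icc m t, (-1 : ℤ) ^ #s = if m = t then (-1) ^ #m else 0 := by
  by_cases hmt : m ⊆ t
  · have hdisj : ∀ u ∈ (t \ m).powerset, Disjoint m u := fun u hu =>
      disjoint_of_subset_right (mem_powerset.1 hu) disjoint_sdiff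
    rw [Icc_eq_image_powerset hmt, sum_image fun u hu w hw huw => by
      rw [← union_sdiff_cancel_left (hdisj u hu), huw, union_sdiff_cancel_left (hdisj w hw)]]
    rw [sum_congr rfl fun u hu => by rw [card_union_of_disjoint (hdisj u hu), pow_add],
      ← mul_sum, sum_powerset_neg_one_pow_card]
    by_cases htm : t ⊆ m
    · rw [if_pos (sdiff_eq_empty_iff_subset.2 htm), if_pos (subset_antisymm hmt htm), mul_one]
    · rw [if_neg (mt sdiff_eq_empty_iff_subset.1 htm), if_neg fun h => htm h.ge, mul_zero]
  · rw [Icc_eq_empty hmt, if_neg fun h => hmt h.le, sum_empty]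

def eulerChar {α : Type*} (F : Finset (Finset α)) : ℤ := ∑ s ∈ F, (-1) ^ (#s + 1)

/-- A finite geometric simplicial complex without the affine independence of its faces. -/
structure IsHullComplex {E : Type*} [AddCommGroup E] [Module ℝ E] (F : Finset (Finset E)) :
    Prop where
  nonempty_of_mem : ∀ s ∈ F, s.Nonempty
  down_closed : ∀ s ∈ F, ∀ t ⊆ s, t.Nonempty → t ∈ F
  inter_subset_convexHull : ∀ s ∈ F, ∀ t ∈ F,
    convexHull ℝ (s : Set E) ∩ convexHull ℝ (t : Set E) ⊆ convexHull ℝ ((s : Set E) ∩ t)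

namespace IsHullComplex

variable {E : Type*} [AddCommGroup E] [Module ℝ E] {F : Finset (Finset E)}

theorem exists_min_mem_convexHull (hF : IsHullComplex F) {x : E} {s : Finset E} (hs : s ∈ F)
    (hx : x ∈ convexHull ℝ (s : Set E)) :
    ∃ m ∈ F, x ∈ convexHull ℝ (m : Set E) ∧ ∀ t ∈ F, x ∈ convexHull ℝ (t : Set E) → m ⊆ t := by
  classical
  obtain ⟨m, hm, hmin⟩ := exists_min_image
    (F.filter fun t : Finset E => x ∈ convexHull ℝ (t : Set E)) card ⟨s, mem_filter.2 ⟨hs, hx⟩⟩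
  obtain ⟨hmF, hxm⟩ := mem_filter.1 hm
  refine ⟨m, hmF, hxm, fun t ht hxt => ?_⟩
  have hxmt : x ∈ convexHull ℝ ((m ∩ t : Finset E) : Set E) := by
    rw [coe_inter]
    exact hF.inter_subset_convexHull m hmF t ht ⟨hxm, hxt⟩
  have hmt : (m ∩ t).Nonempty := by
    rw [← coe_nonempty, ← convexHull_nonempty_iff (𝕜 := ℝ)]
    exact ⟨x, hxmt⟩
  have hmtF := hF.down_closed m hmF _ inter_subset_left hmt
  exact inter_eq_left.1 (eq_of_subset_of_card_le inter_subset_left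
    (hmin _ (mem_filter.2 ⟨hmtF, hxmt⟩)))

open scoped Classical in
theorem sum_sum_superset_neg_one_pow_of_mem_convexHull (hF : IsHullComplex F) (x : E) :
    ∑ s ∈ F with x ∈ convexHull ℝ ((s : Finset E) : Set E), ∑ t ∈ F with s ⊆ t,
      (-1 : ℤ) ^ (#t + #s) = if x ∈ ⋃ s ∈ F, convexHull ℝ (s : Set E) then 1 else 0 := by
  split_ifs with hx
  · obtain ⟨s, hs, hxs⟩ := Set.mem_iUnion₂.1 hx
    obtain ⟨m, hmF, hxm, hmin⟩ := hF.exists_min_mem_convexHull hs hxs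
    have hIcc : ∀ t ∈ F,
        F.filter (fun s : Finset E => x ∈ convexHull ℝ (s : Set E) ∧ s ⊆ t) = Icc m t := by
      intro t ht
      ext s
      simp only [mem_filter, mem_Icc]
      refine ⟨fun ⟨hsF, hxs, hst⟩ => ⟨hmin s hsF hxs, hst⟩, fun ⟨hms, hst⟩ => ?_⟩
      exact ⟨hF.down_closed t ht s hst ((hF.nonempty_of_mem m hmF).mono hms),
        convexHull_mono (coe_subset.2 hms) hxm, hst⟩
    rw [sum_comm' (t' := F)
      (s' := fun t => F.filter fun s : Finset E => x ∈ convexHull ℝ (s : Set E) ∧ s ⊆ t)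
      fun s t => by simp only [mem_filter]; tauto]
    rw [sum_congr rfl fun t ht => by rw [hIcc t ht]]
    simp only [pow_add, ← mul_sum, sum_Icc_neg_one_pow_card, mul_ite, mul_zero]
    rw [sum_ite_eq, if_pos hmF, ← pow_add, Even.neg_one_pow ⟨_, rfl⟩]
  · exact sum_eq_zero fun s hs => (hx (Set.mem_iUnion₂.2 ⟨s, (mem_filter.1 hs).1,
      (mem_filter.1 hs).2⟩)).elim

theorem sum_sum_superset_neg_one_pow_eq_eulerChar [DecidableEq E] (hF : IsHullComplex F) :
    ∑ s ∈ F, ∑ t ∈ F with s ⊆ t, (-1 : ℤ) ^ (#t + #s) = eulerChar F := by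
  rw [sum_comm' (t' := F) (s' := fun t => F.filter (· ⊆ t))
    fun s t => by simp only [mem_filter]; tauto]
  refine sum_congr rfl fun t ht => ?_
  have hsub : F.filter (· ⊆ t) = t.powerset.erase ∅ := by
    ext s
    simp only [mem_filter, mem_erase, mem_powerset, ← nonempty_iff_ne_empty]
    exact ⟨fun ⟨hs, hst⟩ => ⟨hF.nonempty_of_mem s hs, hst⟩,
      fun ⟨hs, hst⟩ => ⟨hF.down_closed t ht s hst hs, hst⟩⟩
  rw [hsub, sum_erase_eq_sub (empty_mem_powerset t)]
  simp only [pow_add, ← mul_sum, sum_powerset_neg_one_pow_card_of_nonempty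
    (hF.nonempty_of_mem t ht), card_empty]
  ring

theorem eulerChar_eq_one [FiniteDimensional ℝ E] (hF : IsHullComplex F) (hne : F.Nonempty)
    (hconv : Convex ℝ (⋃ s ∈ F, convexHull ℝ (s : Set E))) : eulerChar F = 1 := by
  classical
  have hU : ⋃ s ∈ F, convexHull ℝ (s : Set E) = convexHull ℝ (F.biUnion id : Set E) := by
    refine subset_antisymm (Set.iUnion₂_subset fun s hs => convexHull_mono ?_)
      (convexHull_min ?_ hconv)
    · exact coe_subset.2 (subset_biUnion_of_mem id hs)
    · rw [coe_biUnion]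
      exact Set.iUnion₂_mono fun s _ => subset_convexHull ℝ _
  rw [← hF.sum_sum_superset_neg_one_pow_eq_eulerChar]
  obtain ⟨s, hs⟩ := hne
  refine sum_eq_one_of_forall_sum_mem_convexHull_eq_indicator F id hF.nonempty_of_mem _
    ((hF.nonempty_of_mem s hs).mono (subset_biUnion_of_mem id hs)) _ fun x => ?_
  rw [← hU, ← hF.sum_sum_superset_neg_one_pow_of_mem_convexHull]
  rfl

end IsHullComplex

theorem exists_linearMap_lt_of_notMem_convexHull {E : Type*} [AddCommGroup E] [Module ℝ E]
    [FiniteDimensional ℝ E] {s : Set E} (hs : s.Finite) {v : E} (hv : v ∉ convexHull ℝ s) :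
    ∃ (ℓ : E →ₗ[ℝ] ℝ) (c : ℝ), (∀ u ∈ s, ℓ u < c) ∧ c < ℓ v := by
  let e := (Module.finBasis ℝ E).equivFun
  have himage : e.toLinearMap '' convexHull ℝ s = convexHull ℝ (e '' s) :=
    LinearMap.image_convexHull _ _
  obtain ⟨f, c, hf, hcv⟩ := geometric_hahn_banach_closed_point (convex_convexHull ℝ (e '' s))
    ((hs.image e).isCompact_convexHull ℝ).isClosed fun h => hv <| by
      rw [← himage] at h
      obtain ⟨y, hy, hyv⟩ := h
      rwa [e.injective hyv] at hy
  exact ⟨(f : (Fin _ → ℝ) →ₗ[ℝ] ℝ) ∘ₗ e.toLinearMap, c,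
    fun u hu => hf _ (subset_convexHull ℝ _ ⟨u, hu, rfl⟩), hcv⟩

section CrossingPoint

variable {E : Type*} [AddCommGroup E] [Module ℝ E] (ℓ : E →ₗ[ℝ] ℝ) (c : ℝ) (v : E)

noncomputable def crossingPoint (u : E) : E := AffineMap.lineMap v u ((ℓ v - c) / (ℓ v - ℓ u))

variable {ℓ c v}

theorem crossingPoint_eq (u : E) :
    crossingPoint ℓ c v u = v + ((ℓ v - c) / (ℓ v - ℓ u)) • (u - v) := by
  rw [crossingPoint, AffineMap.lineMap_apply_module', add_comm]

theorem map_crossingPoint {u : E} (hu : ℓ u < c) (hv : c < ℓ v) :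
    ℓ (crossingPoint ℓ c v u) = c := by
  have : ℓ v - ℓ u ≠ 0 := by linarith
  rw [crossingPoint_eq, map_add, map_smul, map_sub, smul_eq_mul]
  field_simp
  ring

theorem crossingPoint_mem_segment {u : E} (hu : ℓ u < c) (hv : c < ℓ v) :
    crossingPoint ℓ c v u ∈ segment ℝ v u :=
  lineMap_mem_segment ℝ v u ⟨div_nonneg (by linarith) (by linarith),
    div_le_one_of_le₀ (by linarith) (by linarith)⟩

variable [DecidableEq E] {t : Finset E}

theorem mem_convexHull_image_crossingPoint (ht : ∀ u ∈ t, ℓ u < c) (hv : c < ℓ v) {x : E}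
    (hxc : ℓ x = c) (hx : x ∈ convexHull ℝ ((insert v t : Finset E) : Set E)) :
    x ∈ convexHull ℝ (t.image (crossingPoint ℓ c v) : Set E) := by
  obtain ⟨w, hw0, hw1, hwx⟩ := Finset.mem_convexHull'.1 hx
  rw [sum_insert fun h => (ht v h).not_gt hv] at hw1 hwx
  have hd : ∀ u ∈ t, 0 < ℓ v - ℓ u := fun u hu => by linarith [ht u hu]
  have ha : 0 < ℓ v - c := by linarith
  have hwt : ∑ u ∈ t, w u = 1 - w v := by linarith
  -- rescale the weights of `t` from the points `u` to the points `crossingPoint ℓ c v u`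
  set μ : E → ℝ := fun u => w u * (ℓ v - ℓ u) / (ℓ v - c)
  have hμ : ∑ u ∈ t, μ u = 1 := by
    have := congrArg ℓ hwx
    simp only [map_add, map_sum, map_smul, smul_eq_mul, hxc] at this
    rw [← sum_div, div_eq_one_iff_eq ha.ne']
    simp only [mul_sub, sum_sub_distrib, ← sum_mul, hwt]
    linarith
  have hterm : ∀ u ∈ t, μ u • crossingPoint ℓ c v u = μ u • v + (w u • u - w u • v) := by
    intro u hu
    have : μ u * ((ℓ v - c) / (ℓ v - ℓ u)) = w u := by
      simp only [μ]
      field_simp [(hd u hu).ne', ha.ne']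
    rw [crossingPoint_eq, smul_add, smul_smul, this, smul_sub]
  have hsum : ∑ u ∈ t, μ u • crossingPoint ℓ c v u = x := by
    rw [sum_congr rfl hterm, sum_add_distrib, sum_sub_distrib, ← sum_smul, ← sum_smul, hμ, hwt,
      ← hwx]
    module
  rw [← hsum]
  exact (convex_convexHull ℝ _).sum_mem (fun u hu => div_nonneg (mul_nonneg
    (hw0 u (mem_insert_of_mem hu)) (hd u hu).le) ha.le) hμ
    fun u hu => subset_convexHull ℝ _ (mem_image_of_mem _ hu)

theorem convexHull_image_crossingPoint (ht : ∀ u ∈ t, ℓ u < c) (hv : c < ℓ v) :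
    convexHull ℝ (t.image (crossingPoint ℓ c v) : Set E) =
      {x | ℓ x = c} ∩ convexHull ℝ ((insert v t : Finset E) : Set E) := by
  refine subset_antisymm (convexHull_min ?_ ((convex_hyperplane ℓ.isLinear c).inter
    (convex_convexHull ℝ _))) fun x ⟨hxc, hx⟩ => mem_convexHull_image_crossingPoint ht hv hxc hx
  rintro _ hp
  obtain ⟨u, hu, rfl⟩ := mem_image.1 hp
  exact ⟨map_crossingPoint (ht u hu) hv, segment_subset_convexHull (mem_insert_self v t)
    (mem_insert_of_mem hu) (crossingPoint_mem_segment (ht u hu) hv)⟩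

end CrossingPoint

theorem neg_one_pow_sub_of_le {n i : ℕ} (h : i ≤ n) :
    (-1 : ℤ) ^ (n - i) = (-1) ^ n * (-1) ^ i := by
  obtain ⟨k, rfl⟩ := Nat.exists_eq_add_of_le h
  rw [Nat.add_sub_cancel_left, pow_add, mul_right_comm, ← mul_pow, neg_one_mul, neg_neg, one_pow,
    one_mul]

/-- `hVec K hfin` is `hTransform (fVec K hfin)`. -/
def hTransform (f : ℕ → ℤ) (d k : ℕ) : ℤ :=
  ∑ i ∈ range (k + 1), (-1 : ℤ) ^ (k - i) * ((d + 1 - i).choose (d + 1 - k)) * f i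

section HTransform

variable {f g : ℕ → ℤ}

theorem sum_range_mul_eq_of_eq_add_shift (hf0 : f 0 = g 0)
    (hf : ∀ i, f (i + 1) = g (i + 1) + g i) (φ : ℕ → ℤ) (n : ℕ) :
    ∑ i ∈ range (n + 1), φ i * f i =
      ∑ i ∈ range (n + 1), φ i * g i + ∑ i ∈ range n, φ (i + 1) * g i := by
  rw [sum_range_succ', sum_range_succ' (fun i => φ i * g i)]
  simp only [hf, hf0, mul_add, sum_add_distrib]
  ring

theorem hTransform_succ_self_eq_zero (hf0 : f 0 = g 0) (hf : ∀ i, f (i + 1) = g (i + 1) + g i)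
    {d : ℕ} (hg : g (d + 1) = 0) : hTransform f d (d + 1) = 0 := by
  rw [hTransform, sum_congr rfl fun i hi => by
    rw [neg_one_pow_sub_of_le (Nat.lt_succ_iff.1 (mem_range.1 hi)), Nat.sub_self,
      Nat.choose_zero_right, Nat.cast_one, mul_one, mul_assoc], ← mul_sum,
    sum_range_mul_eq_of_eq_add_shift hf0 hf, sum_range_succ, hg]
  simp only [pow_succ, mul_zero, add_zero, mul_neg_one, neg_mul, sum_neg_distrib, add_neg_cancel]

theorem hTransform_self_eq_zero (hf0 : f 0 = g 0) (hf : ∀ i, f (i + 1) = g (i + 1) + g i)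
    {d : ℕ} (hg : ∑ i ∈ range (d + 1), (-1 : ℤ) ^ i * g i = 0) : hTransform f d d = 0 := by
  have hterm : ∀ i ∈ range (d + 1),
      (-1 : ℤ) ^ (d - i) * ((d + 1 - i).choose (d + 1 - d) : ℤ) * f i =
        (-1) ^ d * ((-1) ^ i * ((d : ℤ) + 1 - i) * f i) := fun i hi => by
    have hid := Nat.lt_succ_iff.1 (mem_range.1 hi)
    rw [neg_one_pow_sub_of_le hid, Nat.add_sub_cancel_left, Nat.choose_one_right,
      Nat.cast_sub (hid.trans (Nat.le_succ d))]
    push_cast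
    ring
  rw [hTransform, sum_congr rfl hterm, ← mul_sum, sum_range_mul_eq_of_eq_add_shift hf0 hf]
  convert mul_zero ((-1 : ℤ) ^ d) using 2
  rw [← hg, sum_range_succ, sum_range_succ, add_right_comm, ← sum_add_distrib]
  congr 1
  · refine sum_congr rfl fun i _ => ?_
    push_cast
    ring
  · ring

end HTransform

section Slice

variable {α : Type*} {𝒜 : Finset (Finset α)}

theorem card_slice_succ_eq_of_insert_mem [DecidableEq α] {v : α} (hinsert : ∀ s ∈ 𝒜, insert v s ∈ 𝒜)
    (herase : ∀ s ∈ 𝒜, s.erase v ∈ 𝒜) (i : ℕ) :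
    #(𝒜 # (i + 1)) = #({s ∈ 𝒜 | v ∉ s} # (i + 1)) + #({s ∈ 𝒜 | v ∉ s} # i) := by
  rw [← card_filter_add_card_filter_not (fun s => v ∉ s)]
  congr 1
  · congr 1
    ext s
    simp only [mem_filter, mem_slice]
    tauto
  · refine card_nbij' (·.erase v) (insert v) (fun s hs => ?_) (fun s hs => ?_)
      (fun s hs => insert_erase ?_) fun s hs => erase_insert ?_
    · simp only [coe_filter, mem_coe, mem_filter, mem_slice, Set.mem_ofPred_eq, not_not] at hs ⊢
      exact ⟨⟨herase s hs.1.1, notMem_erase v s⟩, by rw [card_erase_of_mem hs.2, hs.1.2]; rfl⟩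
    · simp only [coe_filter, mem_coe, mem_filter, mem_slice, Set.mem_ofPred_eq, not_not] at hs ⊢
      exact ⟨⟨hinsert s hs.1.1, by rw [card_insert_of_notMem hs.1.2, hs.2]⟩, mem_insert_self v s⟩
    · simp only [coe_filter, mem_slice, Set.mem_ofPred_eq, not_not] at hs
      exact hs.2
    · simp only [mem_coe, mem_filter, mem_slice] at hs
      exact hs.1.2

theorem slice_zero_insert_empty [DecidableEq α] (h𝒜 : ∅ ∉ 𝒜) : (insert ∅ 𝒜) # 0 = {∅} := by
  rw [slice, filter_insert, if_pos card_empty,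
    filter_false_of_mem fun s hs h0 => h𝒜 (card_eq_zero.1 h0 ▸ hs)]
  rfl

theorem slice_eq_empty_of_forall_card_lt {r : ℕ} (h𝒜 : ∀ s ∈ 𝒜, #s < r) : 𝒜 # r = ∅ :=
  filter_false_of_mem fun s hs hr => (h𝒜 s hs).ne hr

theorem sum_card_slice_nsmul {M : Type*} [AddCommMonoid M] {n : ℕ} (h𝒜 : ∀ s ∈ 𝒜, #s ≤ n)
    (f : ℕ → M) : ∑ i ∈ range (n + 1), #(𝒜 # i) • f i = ∑ s ∈ 𝒜, f #s := by
  rw [← sum_fiberwise_of_maps_to (g := card) (t := range (n + 1))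
    fun s hs => mem_range.2 (Nat.lt_succ_of_le (h𝒜 s hs))]
  refine sum_congr rfl fun i _ => ?_
  rw [slice, ← sum_const]
  exact sum_congr rfl fun s hs => by rw [(mem_filter.1 hs).2]

theorem sum_neg_one_pow_mul_card_slice_insert_empty [DecidableEq α] {n : ℕ} (h𝒜 : ∅ ∉ 𝒜)
    (hcard : ∀ s ∈ 𝒜, #s ≤ n) :
    ∑ i ∈ range (n + 1), (-1 : ℤ) ^ i * #((insert ∅ 𝒜) # i) = 1 - eulerChar 𝒜 := by
  have := sum_card_slice_nsmul (𝒜 := insert ∅ 𝒜) (n := n)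
    ((forall_mem_insert _ _ _).2 ⟨Nat.zero_le n, hcard⟩) fun i => (-1 : ℤ) ^ i
  simp only [nsmul_eq_mul, sum_insert h𝒜, card_empty, pow_zero] at this
  rw [eulerChar, sum_congr rfl fun i _ => mul_comm _ _, this]
  simp only [pow_succ, mul_neg_one, sum_neg_distrib, sub_neg_eq_add]

end Slice

namespace Geometry.SimplicialComplex

variable {E : Type*} [AddCommGroup E] [Module ℝ E] (K : SimplicialComplex ℝ E)

theorem vertices_finite (hfin : K.faces.Finite) : K.vertices.Finite := by
  rw [vertices_eq]
  exact hfin.biUnion fun s _ => s.finite_toSet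

theorem notMem_convexHull_vertices_sdiff (hconv : Convex ℝ K.space) {v : E}
    (hext : v ∈ Set.extremePoints ℝ K.space) : v ∉ convexHull ℝ (K.vertices \ {v}) := fun hv =>
  have hsub := convexHull_min (Set.sdiff_subset.trans K.vertices_subset_space) hconv
  (extremePoints_convexHull_subset (inter_extremePoints_subset_extremePoints_of_subset hsub
    ⟨hv, hext⟩)).2 rfl

section Cone

variable [DecidableEq E] {d : ℕ} {v : E}

theorem insert_mem_faces_of_forall_facet
    (hpure : ∀ s ∈ K.faces, ∃ F ∈ K.faces, s ⊆ F ∧ F.card = d + 1)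
    (hvfacet : ∀ F ∈ K.faces, F.card = d + 1 → v ∈ F) {t : Finset E} (ht : t ∈ K.faces) :
    insert v t ∈ K.faces := by
  obtain ⟨F, hF, htF, hcard⟩ := hpure t ht
  exact K.down_closed hF (insert_subset (hvfacet F hF hcard) htF) (insert_nonempty v t)

theorem card_le_of_forall_facet
    (hpure : ∀ s ∈ K.faces, ∃ F ∈ K.faces, s ⊆ F ∧ F.card = d + 1)
    (hvfacet : ∀ F ∈ K.faces, F.card = d + 1 → v ∈ F) {t : Finset E} (ht : t ∈ K.faces)
    (hvt : v ∉ t) : #t ≤ d := by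
  obtain ⟨F, hF, htF, hcard⟩ := hpure t ht
  have := card_le_card (subset_erase.2 ⟨htF, hvt⟩)
  rwa [card_erase_of_mem (hvfacet F hF hcard), hcard, Nat.add_sub_cancel] at this

variable {L : Finset (Finset E)}

theorem fVec_eq_card_slice (hfin : K.faces.Finite) (i : ℕ) :
    fVec K hfin i = #((insert ∅ hfin.toFinset) # i) := by
  rcases i with _ | i
  · rw [fVec, if_pos rfl, slice_zero_insert_empty fun h => K.empty_notMem (hfin.mem_toFinset.1 h)]
    rfl
  · rw [fVec, if_neg i.succ_ne_zero, slice, filter_insert, if_neg (by simp)]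

theorem fVec_zero_eq (hfin : K.faces.Finite) (hL : ∀ t, t ∈ L ↔ t ∈ K.faces ∧ v ∉ t) :
    fVec K hfin 0 = #((insert ∅ L) # 0) := by
  rw [K.fVec_eq_card_slice, slice_zero_insert_empty fun h => K.empty_notMem ((hL ∅).1 h).1,
    slice_zero_insert_empty fun h => K.empty_notMem (hfin.mem_toFinset.1 h)]

theorem fVec_succ_eq (hfin : K.faces.Finite) (hv : v ∈ K.vertices)
    (hcone : ∀ t ∈ K.faces, insert v t ∈ K.faces) (hL : ∀ t, t ∈ L ↔ t ∈ K.faces ∧ v ∉ t)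
    (i : ℕ) : fVec K hfin (i + 1) = #((insert ∅ L) # (i + 1)) + #((insert ∅ L) # i) := by
  have hlink : {s ∈ insert ∅ hfin.toFinset | v ∉ s} = insert ∅ L := by
    ext s
    simp only [mem_filter, mem_insert, Set.Finite.mem_toFinset, hL]
    constructor
    · rintro ⟨rfl | hs, hvs⟩
      exacts [Or.inl rfl, Or.inr ⟨hs, hvs⟩]
    · rintro (rfl | ⟨hs, hvs⟩)
      exacts [⟨Or.inl rfl, notMem_empty v⟩, ⟨Or.inr hs, hvs⟩]
  rw [K.fVec_eq_card_slice, card_slice_succ_eq_of_insert_mem, hlink]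
  · push_cast
    rfl
  · simp only [mem_insert, Set.Finite.mem_toFinset]
    rintro s (rfl | hs)
    exacts [Or.inr hv, Or.inr (hcone s hs)]
  · simp only [mem_insert, Set.Finite.mem_toFinset]
    rintro s (rfl | hs)
    · exact Or.inl (erase_empty v)
    · rcases (s.erase v).eq_empty_or_nonempty with h | h
      exacts [Or.inl h, Or.inr (K.down_closed hs (erase_subset v s) h)]

end Cone

section CrossingPoint

variable {v : E} {ℓ : E →ₗ[ℝ] ℝ} {c : ℝ}

theorem forall_mem_lt_of_notMem (hbelow : ∀ u ∈ K.vertices, u ≠ v → ℓ u < c) {t : Finset E}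
    (ht : t ∈ K.faces) (hvt : v ∉ t) : ∀ u ∈ t, ℓ u < c := fun u hu =>
  hbelow u (K.down_closed ht (singleton_subset_iff.2 hu) (singleton_nonempty u))
    fun h => hvt (h ▸ hu)

variable [DecidableEq E] {L : Finset (Finset E)}

theorem injOn_crossingPoint (hcone : ∀ t ∈ K.faces, insert v t ∈ K.faces) (hc : c < ℓ v)
    (hbelow : ∀ u ∈ K.vertices, u ≠ v → ℓ u < c) :
    Set.InjOn (crossingPoint ℓ c v) (K.vertices \ {v}) := by
  rintro u ⟨hu, huv : u ≠ v⟩ w ⟨hw, hwv : w ≠ v⟩ huw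
  by_contra hne
  have hedge : ∀ {u}, u ∈ K.vertices → u ≠ v →
      crossingPoint ℓ c v u ∈ convexHull ℝ ((insert v {u} : Finset E) : Set E) := fun hu huv => by
    rw [coe_insert, coe_singleton, convexHull_pair]
    exact crossingPoint_mem_segment (hbelow _ hu huv) hc
  -- the edges from `v` to `u` and to `w` meet only in `v`, which is not on the hyperplane
  have hmem := K.inter_subset_convexHull (hcone _ hu) (hcone _ hw)
    ⟨hedge hu huv, huw ▸ hedge hw hwv⟩
  rw [← coe_inter, ← insert_inter_distrib, singleton_inter_of_notMem (by simpa using hne),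
    insert_empty, coe_singleton, convexHull_singleton, Set.mem_singleton_iff] at hmem
  exact hc.ne (hmem ▸ map_crossingPoint (hbelow u hu huv) hc).symm

theorem isHullComplex_image_crossingPoint (hL : ∀ t, t ∈ L ↔ t ∈ K.faces ∧ v ∉ t)
    (hcone : ∀ t ∈ K.faces, insert v t ∈ K.faces) (hc : c < ℓ v)
    (hbelow : ∀ u ∈ K.vertices, u ≠ v → ℓ u < c) :
    IsHullComplex (L.image (image (crossingPoint ℓ c v))) := by
  have hhull : ∀ t ∈ L, convexHull ℝ (t.image (crossingPoint ℓ c v) : Set E) =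
      {x | ℓ x = c} ∩ convexHull ℝ ((insert v t : Finset E) : Set E) := fun t ht =>
    convexHull_image_crossingPoint
      (K.forall_mem_lt_of_notMem hbelow ((hL t).1 ht).1 ((hL t).1 ht).2) hc
  refine ⟨?_, ?_, ?_⟩ <;> simp only [mem_image]
  · rintro _ ⟨t, ht, rfl⟩
    exact (nonempty_of_mem_faces ((hL t).1 ht).1).image _
  · rintro _ ⟨t, ht, rfl⟩ u hu hune
    obtain ⟨w, hwt, rfl⟩ := subset_image_iff.1 hu
    obtain ⟨htK, hvt⟩ := (hL t).1 ht
    exact ⟨w, (hL w).2 ⟨K.down_closed htK hwt (image_nonempty.1 hune), fun h => hvt (hwt h)⟩,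
      rfl⟩
  · rintro _ ⟨s, hs, rfl⟩ _ ⟨t, ht, rfl⟩
    obtain ⟨hsK, hvs⟩ := (hL s).1 hs
    rw [hhull s hs, hhull t ht, ← coe_inter]
    refine fun x ⟨⟨hxc, hxs⟩, _, hxt⟩ =>
      convexHull_mono (coe_subset.2 (image_inter_subset _ s t)) ?_
    rw [convexHull_image_crossingPoint (fun u hu => K.forall_mem_lt_of_notMem hbelow hsK hvs u
      (mem_inter.1 hu).1) hc, insert_inter_distrib, coe_inter]
    exact ⟨hxc, K.inter_subset_convexHull (hcone s hsK) (hcone t ((hL t).1 ht).1) ⟨hxs, hxt⟩⟩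

theorem iUnion_convexHull_image_crossingPoint (hL : ∀ t, t ∈ L ↔ t ∈ K.faces ∧ v ∉ t)
    (hcone : ∀ t ∈ K.faces, insert v t ∈ K.faces) (hc : c < ℓ v)
    (hbelow : ∀ u ∈ K.vertices, u ≠ v → ℓ u < c) :
    ⋃ t ∈ L.image (image (crossingPoint ℓ c v)), convexHull ℝ (t : Set E) =
      {x | ℓ x = c} ∩ K.space := by
  have hhull : ∀ t ∈ K.faces, v ∉ t → convexHull ℝ (t.image (crossingPoint ℓ c v) : Set E) =
      {x | ℓ x = c} ∩ convexHull ℝ ((insert v t : Finset E) : Set E) := fun t ht hvt =>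
    convexHull_image_crossingPoint (K.forall_mem_lt_of_notMem hbelow ht hvt) hc
  refine subset_antisymm (Set.iUnion₂_subset ?_) fun x ⟨(hxc : ℓ x = c), hx⟩ => ?_
  · simp only [mem_image]
    rintro _ ⟨t, ht, rfl⟩
    obtain ⟨htK, hvt⟩ := (hL t).1 ht
    rw [hhull t htK hvt]
    exact Set.inter_subset_inter_right _ (K.convexHull_subset_space (hcone t htK))
  · obtain ⟨T, hT, hxT⟩ := K.mem_space_iff.1 hx
    have hne : (T.erase v).Nonempty := by
      refine nonempty_iff_ne_empty.2 fun h => ?_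
      obtain rfl := ((erase_eq_empty_iff T v).1 h).resolve_left (K.empty_notMem <| · ▸ hT)
      rw [coe_singleton, convexHull_singleton, Set.mem_singleton_iff] at hxT
      exact hc.ne' (hxT ▸ hxc)
    have hTe : T.erase v ∈ K.faces := K.down_closed hT (erase_subset v T) hne
    refine Set.mem_iUnion₂.2 ⟨_, mem_image_of_mem _ ((hL _).2 ⟨hTe, notMem_erase v T⟩), ?_⟩
    rw [hhull _ hTe (notMem_erase v T)]
    exact ⟨hxc, convexHull_mono (coe_subset.2 (insert_erase_subset v T)) hxT⟩

theorem eulerChar_image_crossingPoint (hL : ∀ t, t ∈ L ↔ t ∈ K.faces ∧ v ∉ t)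
    (hcone : ∀ t ∈ K.faces, insert v t ∈ K.faces) (hc : c < ℓ v)
    (hbelow : ∀ u ∈ K.vertices, u ≠ v → ℓ u < c) :
    eulerChar (L.image (image (crossingPoint ℓ c v))) = eulerChar L := by
  have hinj : Set.InjOn (crossingPoint ℓ c v) (L.biUnion id : Set E) :=
    (K.injOn_crossingPoint hcone hc hbelow).mono fun u hu => by
      obtain ⟨t, ht, hut⟩ := mem_biUnion.1 (mem_coe.1 hu)
      obtain ⟨htK, hvt⟩ := (hL t).1 ht
      exact ⟨K.down_closed htK (singleton_subset_iff.2 hut) (singleton_nonempty u),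
        fun h => hvt ((Set.mem_singleton_iff.1 h) ▸ hut)⟩
  rw [eulerChar, sum_image (injOn_image_of_biUnion_injOn hinj), eulerChar]
  refine sum_congr rfl fun t ht => ?_
  rw [card_image_of_injOn (s := t)
    (hinj.mono fun u hu => mem_coe.2 (mem_biUnion.2 ⟨t, ht, hu⟩))]

end CrossingPoint

theorem eulerChar_eq_one_of_mem_extremePoints [FiniteDimensional ℝ E] [DecidableEq E]
    (hfin : K.faces.Finite) {v : E} (hcone : ∀ t ∈ K.faces, insert v t ∈ K.faces)
    (hconv : Convex ℝ K.space) (hext : v ∈ Set.extremePoints ℝ K.space)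
    {L : Finset (Finset E)} (hL : ∀ t, t ∈ L ↔ t ∈ K.faces ∧ v ∉ t) (hLne : L.Nonempty) :
    eulerChar L = 1 := by
  obtain ⟨ℓ, c, hbelow, hc⟩ := exists_linearMap_lt_of_notMem_convexHull
    (K.vertices_finite hfin).sdiff (K.notMem_convexHull_vertices_sdiff hconv hext)
  replace hbelow : ∀ u ∈ K.vertices, u ≠ v → ℓ u < c := fun u hu huv => hbelow u ⟨hu, huv⟩
  rw [← K.eulerChar_image_crossingPoint hL hcone hc hbelow]
  refine (K.isHullComplex_image_crossingPoint hL hcone hc hbelow).eulerChar_eq_one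
    (hLne.image _) ?_
  rw [K.iUnion_convexHull_image_crossingPoint hL hcone hc hbelow]
  exact (convex_hyperplane ℓ.isLinear c).inter hconv

end Geometry.SimplicialComplex

/-- Let `K` be a geometric simplicial complex in a finite-dimensional real
vector space `E` with finitely many faces, pure of dimension `d ≥ 1`, whose underlying space
is convex. Suppose `v` is a vertex of `K` contained in every facet of `K` and an extreme
point of the underlying space. Then `h_d(K) = 0` and `h_{d+1}(K) = 0`. -/
theorem h_top_eq_zero_of_pointed {E : Type*} [AddCommGroup E] [Module ℝ E]
    [FiniteDimensional ℝ E] (K : Geometry.SimplicialComplex ℝ E)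
    (hfin : K.faces.Finite) (d : ℕ) (hd : 1 ≤ d)
    (hpure : ∀ s ∈ K.faces, ∃ F ∈ K.faces, s ⊆ F ∧ F.card = d + 1)
    (hconv : Convex ℝ K.space) (v : E) (hv : v ∈ K.vertices)
    (hvfacet : ∀ F ∈ K.faces, F.card = d + 1 → v ∈ F)
    (hext : v ∈ Set.extremePoints ℝ K.space) :
    hVec K hfin d d = 0 ∧ hVec K hfin d (d + 1) = 0 := by
  classical
  have hcone : ∀ t ∈ K.faces, insert v t ∈ K.faces := fun t ht =>
    K.insert_mem_faces_of_forall_facet hpure hvfacet ht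
  set L := hfin.toFinset.filter (v ∉ ·)
  have hL : ∀ t, t ∈ L ↔ t ∈ K.faces ∧ v ∉ t := fun t => by simp [L]
  have hLempty : ∅ ∉ L := fun h => K.empty_notMem ((hL ∅).1 h).1
  have hLcard : ∀ t ∈ L, #t ≤ d := fun t ht =>
    K.card_le_of_forall_facet hpure hvfacet ((hL t).1 ht).1 ((hL t).1 ht).2
  have hLne : L.Nonempty := by
    obtain ⟨F, hF, -, hcard⟩ := hpure {v} hv
    refine ⟨F.erase v, (hL _).2 ⟨K.down_closed hF (erase_subset v F) ?_, notMem_erase v F⟩⟩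
    rw [← card_pos, card_erase_of_mem (hvfacet F hF hcard), hcard]
    omega
  let g : ℕ → ℤ := fun i => #((insert ∅ L) # i)
  have hf0 : fVec K hfin 0 = g 0 := K.fVec_zero_eq hfin hL
  have hf : ∀ i, fVec K hfin (i + 1) = g (i + 1) + g i := K.fVec_succ_eq hfin hv hcone hL
  refine ⟨hTransform_self_eq_zero hf0 hf ?_, hTransform_succ_self_eq_zero hf0 hf ?_⟩ <;>
    simp only [g]
  · rw [sum_neg_one_pow_mul_card_slice_insert_empty hLempty hLcard,
      K.eulerChar_eq_one_of_mem_extremePoints hfin hcone hconv hext hL hLne, sub_self]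
  · rw [slice_eq_empty_of_forall_card_lt, card_empty, Nat.cast_zero]
    simp only [mem_insert, forall_eq_or_imp, card_empty]
    exact ⟨d.succ_pos, fun t ht => Nat.lt_succ_of_le (hLcard t ht)⟩
end

section
/- Fix natural numbers d ≥ 1 and n ≥ 2, and let k : ℕ → ℤ be any sequence. Define e : ℕ → ℤ by e(i) = Σ_{j=0}^{i+1} k(j) · C(d+1-j, i+1-j). Then Σ_{i=0}^{d} e(i) · C(n-2, i) = Σ_{j=0}^{d+1} k(j) · C(n+d-1-j, d), where C(a,b) denotes the binomial coefficient (interpreted as 0 when b > a). -/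
/-!
Reflecting each face count, `C(d+1-j, i+1-j) = C(d+1-j, d-i)`, and extending the inner sum to
all `j ≤ d+1` (the new terms vanish), the left side becomes
`∑_j k j · ∑_i C(n-2, i) · C(d+1-j, d-i)`, and Vandermonde's identity collapses the inner sum
to `C(n-2 + d+1-j, d) = C(n+d-1-j, d)`.
-/

open Finset

theorem Nat.sum_range_choose_mul_choose_sub (m p q : ℕ) :
    ∑ i ∈ range (q + 1), m.choose i * p.choose (q - i) = (m + p).choose q := by
  rw [Nat.add_choose_eq, Nat.sum_antidiagonal_eq_sum_range_succ_mk]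

theorem sum_range_mul_choose_eq_sum_range_mul_choose_sub {R : Type*} [Semiring R]
    (k : ℕ → R) {d i : ℕ} (hi : i ≤ d) :
    ∑ j ∈ range (i + 2), k j * ((d + 1 - j).choose (i + 1 - j) : R)
      = ∑ j ∈ range (d + 2), k j * ((d + 1 - j).choose (d - i) : R) := by
  refine sum_subset_zero_on_sdiff (range_subset_range.2 (by omega)) ?_ ?_
  · intro j hj
    simp only [mem_sdiff, mem_range, not_lt] at hj
    rw [Nat.choose_eq_zero_of_lt (by omega), Nat.cast_zero, mul_zero]
  · intro j hj
    simp only [mem_range] at hj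
    rw [Nat.choose_symm_of_eq_add (b := d - i) (by omega)]

theorem interior_sum_identity_general (d n : ℕ) (hn : 2 ≤ n) (k e : ℕ → ℤ)
    (he : ∀ i ≤ d,
      e i = ∑ j ∈ Finset.range (i + 2), k j * ((d + 1 - j).choose (i + 1 - j))) :
    (∑ i ∈ Finset.range (d + 1), e i * ((n - 2).choose i))
      = ∑ j ∈ Finset.range (d + 2), k j * ((n + d - 1 - j).choose d) := by
  calc ∑ i ∈ range (d + 1), e i * ((n - 2).choose i : ℤ)
      = ∑ i ∈ range (d + 1), ∑ j ∈ range (d + 2),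
          k j * ((n - 2).choose i * (d + 1 - j).choose (d - i) : ℕ) := by
        refine sum_congr rfl fun i hi => ?_
        have hid : i ≤ d := Nat.lt_succ_iff.1 (mem_range.1 hi)
        rw [he i hid, sum_range_mul_choose_eq_sum_range_mul_choose_sub k hid, sum_mul]
        refine sum_congr rfl fun j _ => ?_
        push_cast
        ring
    _ = ∑ j ∈ range (d + 2), k j * ((n + d - 1 - j).choose d : ℕ) := by
        rw [sum_comm]
        refine sum_congr rfl fun j hj => ?_
        rw [← mul_sum, ← Nat.cast_sum, Nat.sum_range_choose_mul_choose_sub]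
        have : n - 2 + (d + 1 - j) = n + d - 1 - j := by simp only [mem_range] at hj; omega
        rw [this]

/-- Fix natural numbers `d ≥ 1` and `n ≥ 2`, and let `k : ℕ → ℤ` be any
sequence. Suppose `e : ℕ → ℤ` satisfies `e i = ∑_{j=0}^{i+1} k j · C(d+1-j, i+1-j)`. Then
`∑_{i=0}^{d} e i · C(n-2, i) = ∑_{j=0}^{d+1} k j · C(n+d-1-j, d)`, where the binomial
coefficient is interpreted as `0` when its lower index exceeds its upper index. -/
theorem interior_sum_identity (d n : ℕ) (hd : 1 ≤ d) (hn : 2 ≤ n) (k e : ℕ → ℤ)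
    (he : ∀ i ≤ d,
      e i = ∑ j ∈ Finset.range (i + 2), k j * ((d + 1 - j).choose (i + 1 - j))) :
    (∑ i ∈ Finset.range (d + 1), e i * ((n - 2).choose i))
      = ∑ j ∈ Finset.range (d + 2), k j * ((n + d - 1 - j).choose d) :=
  interior_sum_identity_general d n hn k e he
end
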